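/- Let G be a graph with Δ(G) ≥ 4 and L a list assignment with |L(v)| ≥ Δ(G) + 3. Suppose u is a vertex of degree 3 all of whose three neighbors u₁, u₂, u₃ have degree 2 in G. If G − {u, u₁, u₂, u₃} admits a 2-distance L-coloring, then so does G. -/

import Mathlib

/-!
Greedy extension. Removing `N[u]` creates no new 2-paths between the remaining vertices, since
`u` has no neighbour outside `N[u]` and each `uᵢ` has only one, its other neighbour `wᵢ`; so the
given coloring is a 2-distance coloring of `G - N[u]` inside `G`. Each `uᵢ` then sees `wᵢ`, at most
`Δ - 1` further neighbours of `wᵢ`, and the previously colored `uⱼ`: at most `Δ + 2` forbidden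
colors. Finally `u` sees only `u₁, u₂, u₃, w₁, w₂, w₃`, and `6 < Δ + 3` as `Δ ≥ 4`.
-/

open SimpleGraph

/-- Maximum average degree: the supremum over all nonempty subgraphs `H` of `2|E(H)|/|V(H)|`. -/
noncomputable def mad {V : Type} [Fintype V] (G : SimpleGraph V) : ℝ :=
  sSup {x : ℝ | ∃ H : G.Subgraph, H.verts.Nonempty ∧
    x = 2 * H.edgeSet.ncard / H.verts.ncard}

/-- Two distinct vertices are at distance at most 2. -/
def TwoDistAdj {V : Type} (G : SimpleGraph V) (u v : V) : Prop :=
  u ≠ v ∧ (G.Adj u v ∨ ∃ w, G.Adj u w ∧ G.Adj w v)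

/-- `φ` is a 2-distance coloring of `G` from the lists `L`: each vertex gets a color from
its list and vertices at distance at most 2 get distinct colors. -/
def IsTwoDistListColoring {V : Type} (G : SimpleGraph V) (L : V → Finset ℕ) (φ : V → ℕ) :
    Prop :=
  (∀ v, φ v ∈ L v) ∧ ∀ u v, TwoDistAdj G u v → φ u ≠ φ v

open Finset

namespace TwoDistAdj

variable {V : Type} {G : SimpleGraph V} {x y : V}

theorem symm (h : TwoDistAdj G x y) : TwoDistAdj G y x := by
  obtain ⟨hne, hxy | ⟨w, hxw, hwy⟩⟩ := h
  · exact ⟨hne.symm, Or.inl hxy.symm⟩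
  · exact ⟨hne.symm, Or.inr ⟨w, hwy.symm, hxw.symm⟩⟩

theorem exists_adj (h : TwoDistAdj G x y) : ∃ w, G.Adj x w ∧ (y = w ∨ G.Adj w y) := by
  obtain ⟨-, hxy | ⟨w, hxw, hwy⟩⟩ := h
  · exact ⟨y, hxy, Or.inl rfl⟩
  · exact ⟨w, hxw, Or.inr hwy⟩

end TwoDistAdj

instance {V : Type} [Fintype V] [DecidableEq V] (G : SimpleGraph V) [DecidableRel G.Adj] :
    DecidableRel (TwoDistAdj G) :=
  fun _ _ => inferInstanceAs (Decidable (_ ∧ _))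

/-- Distances are measured in `G`, not in the subgraph induced by `A`. -/
def IsTwoDistListColoringOn {V : Type} (G : SimpleGraph V) (L : V → Finset ℕ) (A : Finset V)
    (φ : V → ℕ) : Prop :=
  (∀ v ∈ A, φ v ∈ L v) ∧ ∀ x ∈ A, ∀ y ∈ A, TwoDistAdj G x y → φ x ≠ φ y

theorem Finset.card_filter_union_le {α : Type*} [DecidableEq α] (p : α → Prop) [DecidablePred p]
    (s t : Finset α) : #{x ∈ s ∪ t | p x} ≤ #s + #{x ∈ t | p x} := by
  rw [filter_union]
  exact (card_union_le _ _).trans (Nat.add_le_add_right (card_filter_le _ _) _)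

section TwoDistListColoringOn

variable {V : Type} {G : SimpleGraph V} {L : V → Finset ℕ}

theorem IsTwoDistListColoringOn.isTwoDistListColoring [Fintype V] {φ : V → ℕ}
    (hφ : IsTwoDistListColoringOn G L univ φ) : IsTwoDistListColoring G L φ :=
  ⟨fun v => hφ.1 v (mem_univ v), fun x y => hφ.2 x (mem_univ x) y (mem_univ y)⟩

theorem IsTwoDistListColoringOn.exists_insert [Fintype V] [DecidableEq V] [DecidableRel G.Adj]
    {A : Finset V} {φ : V → ℕ} {v : V} (hφ : IsTwoDistListColoringOn G L A φ) (hv : v ∉ A)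
    (hcard : #{y ∈ A | TwoDistAdj G v y} < #(L v)) :
    ∃ c, IsTwoDistListColoringOn G L (insert v A) (Function.update φ v c) := by
  obtain ⟨c, hcL, hc⟩ := exists_mem_notMem_of_card_lt_card (card_image_le.trans_lt hcard)
  have hfresh : ∀ y ∈ A, TwoDistAdj G v y → c ≠ φ y := fun y hy hvy hcy =>
    hc (mem_image.2 ⟨y, mem_filter.2 ⟨hy, hvy⟩, hcy.symm⟩)
  have hupd : ∀ y ∈ A, Function.update φ v c y = φ y := fun y hy =>
    Function.update_of_ne (ne_of_mem_of_not_mem hy hv) c φ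
  refine ⟨c, fun y hy => ?_, fun x hx y hy hxy => ?_⟩
  · rcases mem_insert.1 hy with rfl | hy
    · simpa using hcL
    · simpa [hupd y hy] using hφ.1 y hy
  · rcases mem_insert.1 hx with rfl | hxA <;> rcases mem_insert.1 hy with rfl | hyA
    · exact absurd rfl hxy.1
    · simpa [hupd y hyA] using hfresh y hyA hxy
    · simpa [hupd x hxA] using (hfresh x hxA hxy.symm).symm
    · simpa [hupd x hxA, hupd y hyA] using hφ.2 x hxA y hyA hxy

theorem exists_isTwoDistListColoringOn_of_induce (A : Finset V)
    (hA : ∀ w ∉ A, ∀ x ∈ A, ∀ y ∈ A, G.Adj w x → G.Adj w y → x = y)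
    (h : ∃ φ, IsTwoDistListColoring (G.induce (A : Set V)) (fun y => L y.1) φ) :
    ∃ ψ, IsTwoDistListColoringOn G L A ψ := by
  classical
  obtain ⟨φ, hφL, hφ⟩ := h
  refine ⟨fun y => if hy : y ∈ A then φ ⟨y, hy⟩ else 0, fun y hy => ?_, fun x hx y hy hxy => ?_⟩
  · simpa [hy] using hφL ⟨y, hy⟩
  · simp only [hx, hy, dite_true]
    obtain ⟨hne, hpath⟩ := hxy
    refine hφ ⟨x, hx⟩ ⟨y, hy⟩ ⟨fun h => hne (congrArg Subtype.val h), ?_⟩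
    rcases hpath with hadj | ⟨w, hxw, hwy⟩
    · exact Or.inl hadj
    · by_cases hw : w ∈ A
      · exact Or.inr ⟨⟨w, hw⟩, hxw, hwy⟩
      · exact absurd (hA w hw x hx y hy hxw.symm hwy) hne

end TwoDistListColoringOn

section LocalCount

variable {V : Type} [Fintype V] [DecidableEq V] {G : SimpleGraph V} [DecidableRel G.Adj]

theorem exists_neighborFinset_eq_pair {x a : V} (hx : G.degree x = 2) (ha : G.Adj x a) :
    ∃ b, G.neighborFinset x = {a, b} := by
  obtain ⟨p, q, -, hpq⟩ := card_eq_two.1 hx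
  have haN : a ∈ ({p, q} : Finset V) := hpq ▸ (G.mem_neighborFinset x a).2 ha
  rcases mem_insert.1 haN with rfl | haq
  · exact ⟨q, hpq⟩
  · rw [mem_singleton.1 haq]
    exact ⟨p, hpq.trans (pair_comm p q)⟩

theorem eq_of_adj_of_neighborFinset_eq_pair {w a b x : V} (hw : G.neighborFinset w = {a, b})
    (hx : G.Adj w x) (hxa : x ≠ a) : x = b := by
  have hxN := (G.mem_neighborFinset w x).2 hx
  rw [hw] at hxN
  simpa [hxa] using hxN

theorem eq_of_adj_of_adj_of_neighborFinset_eq_pair {w a b x y : V}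
    (hw : G.neighborFinset w = {a, b}) (hx : G.Adj w x) (hy : G.Adj w y) (hxa : x ≠ a)
    (hya : y ≠ a) : x = y :=
  (eq_of_adj_of_neighborFinset_eq_pair hw hx hxa).trans
    (eq_of_adj_of_neighborFinset_eq_pair hw hy hya).symm

theorem card_filter_twoDistAdj_le_maxDegree {A : Finset V} {x a b : V}
    (hx : G.neighborFinset x = {a, b}) (hA : A ⊆ (insert a (G.neighborFinset a))ᶜ) :
    #{y ∈ A | TwoDistAdj G x y} ≤ G.maxDegree := by
  have hxb : x ∈ G.neighborFinset b :=
    (G.mem_neighborFinset b x).2 ((G.mem_neighborFinset x b).1 (by simp [hx])).symm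
  have hsub : {y ∈ A | TwoDistAdj G x y} ⊆ insert b ((G.neighborFinset b).erase x) := by
    intro y hy
    obtain ⟨hyA, hxy⟩ := mem_filter.1 hy
    obtain ⟨w, hxw, hwy⟩ := hxy.exists_adj
    have hw : w = a ∨ w = b := by simpa [hx] using (G.mem_neighborFinset x w).2 hxw
    rcases hw with rfl | rfl
    · have hy' := mem_compl.1 (hA hyA)
      rcases hwy with rfl | hwy
      · exact absurd (mem_insert_self _ _) hy'
      · exact absurd (mem_insert_of_mem ((G.mem_neighborFinset _ _).2 hwy)) hy'
    · rcases hwy with rfl | hwy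
      · exact mem_insert_self _ _
      · exact mem_insert_of_mem (mem_erase.2 ⟨hxy.1.symm, (G.mem_neighborFinset _ _).2 hwy⟩)
  calc #{y ∈ A | TwoDistAdj G x y}
      ≤ #(insert b ((G.neighborFinset b).erase x)) := card_le_card hsub
    _ ≤ #((G.neighborFinset b).erase x) + 1 := card_insert_le _ _
    _ = G.degree b := by
      rw [card_erase_of_mem hxb, Nat.sub_add_cancel (card_pos.2 ⟨x, hxb⟩),
        card_neighborFinset_eq_degree]
    _ ≤ G.maxDegree := G.degree_le_maxDegree b

theorem card_filter_twoDistAdj_le_sum {A : Finset V} {x : V}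
    (hA : ∀ a ∈ G.neighborFinset x, a ∉ A) :
    #{y ∈ A | TwoDistAdj G x y} ≤ ∑ a ∈ G.neighborFinset x, (G.degree a - 1) := by
  have hsub : {y ∈ A | TwoDistAdj G x y} ⊆
      (G.neighborFinset x).biUnion fun a => (G.neighborFinset a).erase x := by
    intro y hy
    obtain ⟨hyA, hxy⟩ := mem_filter.1 hy
    obtain ⟨w, hxw, rfl | hwy⟩ := hxy.exists_adj
    · exact absurd hyA (hA _ ((G.mem_neighborFinset _ _).2 hxw))
    · exact mem_biUnion.2 ⟨w, (G.mem_neighborFinset _ _).2 hxw,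
        mem_erase.2 ⟨hxy.1.symm, (G.mem_neighborFinset _ _).2 hwy⟩⟩
  calc #{y ∈ A | TwoDistAdj G x y}
      ≤ #((G.neighborFinset x).biUnion fun a => (G.neighborFinset a).erase x) := card_le_card hsub
    _ ≤ ∑ a ∈ G.neighborFinset x, #((G.neighborFinset a).erase x) := card_biUnion_le
    _ = ∑ a ∈ G.neighborFinset x, (G.degree a - 1) := sum_congr rfl fun a ha => by
      rw [card_erase_of_mem ((G.mem_neighborFinset a x).2 ((G.mem_neighborFinset x a).1 ha).symm),
        card_neighborFinset_eq_degree]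

end LocalCount

section DegreeTwoNeighbors

variable {V : Type} [Fintype V] [DecidableEq V] {G : SimpleGraph V} [DecidableRel G.Adj]
  {L : V → Finset ℕ} {u : V}

theorem exists_isTwoDistListColoringOn_union_of_subset_neighborFinset
    (hdeg : ∀ v ∈ G.neighborFinset u, G.degree v = 2)
    (hL : ∀ v ∈ G.neighborFinset u, G.maxDegree + G.degree u ≤ #(L v)) {φ : V → ℕ}
    (hφ : IsTwoDistListColoringOn G L (insert u (G.neighborFinset u))ᶜ φ) {S : Finset V}
    (hS : S ⊆ G.neighborFinset u) :
    ∃ ψ, IsTwoDistListColoringOn G L (S ∪ (insert u (G.neighborFinset u))ᶜ) ψ := by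
  induction S using Finset.induction_on with
  | empty => exact ⟨φ, by rwa [empty_union]⟩
  | insert v S hvS ih =>
    have hv : v ∈ G.neighborFinset u := hS (mem_insert_self v S)
    obtain ⟨ψ, hψ⟩ := ih ((subset_insert v S).trans hS)
    obtain ⟨b, hb⟩ :=
      exists_neighborFinset_eq_pair (hdeg v hv) ((G.mem_neighborFinset u v).1 hv).symm
    have hS_lt : #S < G.degree u := by
      have := card_le_card hS
      rw [card_insert_of_notMem hvS, card_neighborFinset_eq_degree] at this
      omega
    have hcount := card_filter_twoDistAdj_le_maxDegree hb (subset_refl _)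
    obtain ⟨c, hc⟩ := hψ.exists_insert (v := v) (by simp [hvS, hv])
      ((card_filter_union_le _ _ _).trans_lt (by linarith [hL v hv]))
    exact ⟨_, by rwa [insert_union]⟩

theorem exists_isTwoDistListColoring_of_forall_degree_neighbor_eq_two
    (hdeg : ∀ v ∈ G.neighborFinset u, G.degree v = 2)
    (hL : ∀ v ∈ G.neighborFinset u, G.maxDegree + G.degree u ≤ #(L v))
    (hLu : 2 * G.degree u < #(L u))
    (hcol : ∃ φ, IsTwoDistListColoring
      (G.induce ((insert u (G.neighborFinset u))ᶜ : Finset V)) (fun y => L y.1) φ) :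
    ∃ φ, IsTwoDistListColoring G L φ := by
  set A : Finset V := (insert u (G.neighborFinset u))ᶜ
  have hshortcut : ∀ w ∉ A, ∀ x ∈ A, ∀ y ∈ A, G.Adj w x → G.Adj w y → x = y := by
    intro w hw x hx y hy hwx hwy
    rcases mem_insert.1 (notMem_compl.1 hw) with rfl | hwN
    · simp [A, hwx] at hx
    · obtain ⟨b, hb⟩ :=
        exists_neighborFinset_eq_pair (hdeg w hwN) ((G.mem_neighborFinset u w).1 hwN).symm
      have hxu : x ≠ u := by rintro rfl; simp [A] at hx
      have hyu : y ≠ u := by rintro rfl; simp [A] at hy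
      exact eq_of_adj_of_adj_of_neighborFinset_eq_pair hb hwx hwy hxu hyu
  obtain ⟨φ₀, hφ₀⟩ := exists_isTwoDistListColoringOn_of_induce A hshortcut hcol
  obtain ⟨φ₁, hφ₁⟩ :=
    exists_isTwoDistListColoringOn_union_of_subset_neighborFinset hdeg hL hφ₀ (subset_refl _)
  have hcount : #{y ∈ G.neighborFinset u ∪ A | TwoDistAdj G u y} < #(L u) := calc
    _ ≤ #(G.neighborFinset u) + #{y ∈ A | TwoDistAdj G u y} := card_filter_union_le _ _ _
    _ ≤ G.degree u + ∑ v ∈ G.neighborFinset u, (G.degree v - 1) :=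
      Nat.add_le_add (card_neighborFinset_eq_degree G u).le
        (card_filter_twoDistAdj_le_sum fun v hv => by simp [A, hv])
    _ = 2 * G.degree u := by
      rw [sum_congr rfl fun v hv => by rw [hdeg v hv], sum_const, card_neighborFinset_eq_degree,
        smul_eq_mul]
      ring
    _ < #(L u) := hLu
  obtain ⟨c, hc⟩ := hφ₁.exists_insert (by simp) hcount
  have huniv : insert u (G.neighborFinset u ∪ A) = univ := by
    ext y
    simp [A]
    tauto
  exact ⟨_, (huniv ▸ hc).isTwoDistListColoring⟩

end DegreeTwoNeighbors

/-- If `Δ(G) ≥ 4`, lists have size at least `Δ(G) + 3`, and `u` is a 3-vertex whose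
three neighbors `u₁, u₂, u₃` all have degree 2, then any 2-distance list coloring of
`G − {u, u₁, u₂, u₃}` extends to `G`. -/
theorem extend_coloring_111_vertex
    {V : Type} [Fintype V] [DecidableEq V] (G : SimpleGraph V) [DecidableRel G.Adj]
    (hΔ : 4 ≤ G.maxDegree)
    (L : V → Finset ℕ) (hL : ∀ y, G.maxDegree + 3 ≤ (L y).card)
    (u u₁ u₂ u₃ : V) (hdu : G.degree u = 3)
    (h1 : G.Adj u u₁) (h2 : G.Adj u u₂) (h3 : G.Adj u u₃)
    (h12 : u₁ ≠ u₂) (h13 : u₁ ≠ u₃) (h23 : u₂ ≠ u₃)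
    (hd1 : G.degree u₁ = 2) (hd2 : G.degree u₂ = 2) (hd3 : G.degree u₃ = 2)
    (hcol : ∃ φ, IsTwoDistListColoring
      (G.induce {y | y ≠ u ∧ y ≠ u₁ ∧ y ≠ u₂ ∧ y ≠ u₃}) (fun y => L y.1) φ) :
    ∃ φ : V → ℕ, IsTwoDistListColoring G L φ := by
  have hNu : G.neighborFinset u = {u₁, u₂, u₃} :=
    (eq_of_subset_of_card_le (by simp [insert_subset_iff, h1, h2, h3])
      (by simp [hdu, h12, h13, h23])).symm
  have hA : (((insert u (G.neighborFinset u))ᶜ : Finset V) : Set V) =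
      {y | y ≠ u ∧ y ≠ u₁ ∧ y ≠ u₂ ∧ y ≠ u₃} := by
    ext y
    simp [hNu]
    tauto
  refine exists_isTwoDistListColoring_of_forall_degree_neighbor_eq_two ?_ ?_ ?_ (hA ▸ hcol)
  · simp only [hNu, mem_insert, mem_singleton]
    rintro v (rfl | rfl | rfl) <;> assumption
  · exact fun v _ => hdu ▸ hL v
  · linarith [hL u]
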